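/- arXiv:1907.08811 — 2 statements merged into one kernel-verified Lean document; each statement's English description precedes it below -/
import Mathlib

section
/- Let A⁽¹⁾, …, A⁽ᴺ⁾ be invertible real square matrices with ∏_{i=1}^N σ_min(A⁽ⁱ⁾) > 1, and let 𝒜 = I − A⁽ᴺ⁾ ⊗ ⋯ ⊗ A⁽²⁾ ⊗ A⁽¹⁾. Then 𝒜 is invertible and cond(𝒜) ≤ (∏ᵢ σ_min(A⁽ⁱ⁾) / (∏ᵢ σ_min(A⁽ⁱ⁾) − 1)) · (1 + ∏ᵢ ‖A⁽ⁱ⁾‖₂). -/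
/-!
The Kronecker product `K` acts factor by factor: on a vector sliced along the first index it
applies the remaining factors to every slice and then `A 0` to every fibre. By induction on the
number of factors, `σ ‖x‖ ≤ ‖K x‖ ≤ P ‖x‖` with `σ = ∏ σ_min(Aᵢ)` and `P = ∏ ‖Aᵢ‖₂`. Hence
`‖(I - K) x‖ ≥ (σ - 1) ‖x‖`, so `I - K` is invertible with `‖(I - K)⁻¹‖₂ ≤ 1 / (σ - 1)`, while
`‖I - K‖₂ ≤ 1 + P`.
-/

open Matrix

/-- The spectral norm (largest singular value) of a real matrix, as the operator
norm of the induced map between Euclidean spaces. -/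
noncomputable def specNorm {m n : Type*} [Fintype m] [Fintype n] [DecidableEq n]
    (M : Matrix m n ℝ) : ℝ :=
  ‖LinearMap.toContinuousLinearMap (Matrix.toEuclideanLin M)‖

/-- The smallest singular value of a real matrix: the infimum of `‖Mx‖` over
unit vectors `x`. -/
noncomputable def sigmaMin {m n : Type*} [Fintype m] [Fintype n] [DecidableEq n]
    (M : Matrix m n ℝ) : ℝ :=
  sInf ((fun x => ‖Matrix.toEuclideanLin M x‖) '' Metric.sphere 0 1)

/-- The Kronecker product of a finite family of square matrices, realized on the
dependent-product index type. -/
noncomputable def kronFamily {N : ℕ} {n : Fin N → Type*} [∀ i, Fintype (n i)]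
    (A : ∀ i, Matrix (n i) (n i) ℝ) : Matrix (∀ i, n i) (∀ i, n i) ℝ :=
  fun a b => ∏ i, A i (a i) (b i)

section SingularValues

variable {m n : Type*} [Fintype m] [Fintype n] [DecidableEq n]

lemma specNorm_nonneg (M : Matrix m n ℝ) : 0 ≤ specNorm M := norm_nonneg _

lemma sigmaMin_nonneg (M : Matrix m n ℝ) : 0 ≤ sigmaMin M :=
  Real.sInf_nonneg (by rintro _ ⟨_, -, rfl⟩; exact norm_nonneg _)

lemma norm_toEuclideanLin_le_specNorm_mul (M : Matrix m n ℝ) (x : EuclideanSpace ℝ n) :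
    ‖toEuclideanLin M x‖ ≤ specNorm M * ‖x‖ :=
  (LinearMap.toContinuousLinearMap (toEuclideanLin M)).le_opNorm x

lemma specNorm_le_of_norm_le {M : Matrix m n ℝ} {c : ℝ} (hc : 0 ≤ c)
    (h : ∀ x, ‖toEuclideanLin M x‖ ≤ c * ‖x‖) : specNorm M ≤ c :=
  ContinuousLinearMap.opNorm_le_bound _ hc h

lemma sigmaMin_mul_norm_le_norm_toEuclideanLin (M : Matrix m n ℝ) (x : EuclideanSpace ℝ n) :
    sigmaMin M * ‖x‖ ≤ ‖toEuclideanLin M x‖ := by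
  rcases eq_or_ne x 0 with rfl | hx
  · simp
  have hx : 0 < ‖x‖ := norm_pos_iff.mpr hx
  have hunit : ‖x‖⁻¹ • x ∈ Metric.sphere (0 : EuclideanSpace ℝ n) 1 := by
    simp [norm_smul, hx.ne']
  have hbdd : BddBelow ((fun x => ‖toEuclideanLin M x‖) '' Metric.sphere 0 1) :=
    ⟨0, by rintro _ ⟨_, -, rfl⟩; exact norm_nonneg _⟩
  have hle : sigmaMin M ≤ ‖x‖⁻¹ * ‖toEuclideanLin M x‖ := by
    have : sigmaMin M ≤ ‖toEuclideanLin M (‖x‖⁻¹ • x)‖ := csInf_le hbdd ⟨_, hunit, rfl⟩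
    simpa [norm_smul, hx.le] using this
  rw [mul_comm]
  exact (le_inv_mul_iff₀ hx).mp hle

lemma sigmaMin_sq_mul_sum_sq_le (M : Matrix m n ℝ) (v : n → ℝ) :
    sigmaMin M ^ 2 * ∑ b, v b ^ 2 ≤ ∑ a, (M *ᵥ v) a ^ 2 := by
  have h := sigmaMin_mul_norm_le_norm_toEuclideanLin M (WithLp.toLp 2 v)
  rw [← sq_le_sq₀ (by positivity [sigmaMin_nonneg M]) (norm_nonneg _), mul_pow,
    EuclideanSpace.real_norm_sq_eq, EuclideanSpace.real_norm_sq_eq] at h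
  simpa using h

lemma sum_sq_mulVec_le_specNorm_sq_mul (M : Matrix m n ℝ) (v : n → ℝ) :
    ∑ a, (M *ᵥ v) a ^ 2 ≤ specNorm M ^ 2 * ∑ b, v b ^ 2 := by
  have h := norm_toEuclideanLin_le_specNorm_mul M (WithLp.toLp 2 v)
  rw [← sq_le_sq₀ (norm_nonneg _) (by positivity [specNorm_nonneg M]), mul_pow,
    EuclideanSpace.real_norm_sq_eq, EuclideanSpace.real_norm_sq_eq] at h
  simpa using h

end SingularValues

section SquareMatrices

variable {n : Type*} [Fintype n] [DecidableEq n]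

lemma isUnit_of_mul_norm_le_norm_toEuclideanLin {M : Matrix n n ℝ} {c : ℝ} (hc : 0 < c)
    (hM : ∀ x, c * ‖x‖ ≤ ‖toEuclideanLin M x‖) : IsUnit M := by
  refine mulVec_injective_iff_isUnit.mp fun v w hvw => ?_
  have h := hM (WithLp.toLp 2 (v - w))
  simp only [toLpLin_toLp, toLin'_apply, mulVec_sub, hvw, sub_self, WithLp.toLp_zero,
    norm_zero] at h
  have : ‖WithLp.toLp 2 (v - w)‖ = 0 :=
    le_antisymm (nonpos_of_mul_nonpos_right h hc) (norm_nonneg _)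
  simpa [sub_eq_zero] using this

lemma specNorm_inv_le_of_mul_norm_le_norm_toEuclideanLin {M : Matrix n n ℝ} {c : ℝ}
    (hc : 0 < c) (hM : ∀ x, c * ‖x‖ ≤ ‖toEuclideanLin M x‖) : specNorm M⁻¹ ≤ c⁻¹ := by
  have hdet : IsUnit M.det := (isUnit_iff_isUnit_det M).mp
    (isUnit_of_mul_norm_le_norm_toEuclideanLin hc hM)
  refine specNorm_le_of_norm_le (inv_nonneg.mpr hc.le) fun y => ?_
  have hy : toEuclideanLin M (toEuclideanLin M⁻¹ y) = y := by
    simp [toLpLin_apply, mulVec_mulVec, mul_nonsing_inv M hdet]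
  rw [le_inv_mul_iff₀ hc]
  simpa [hy] using hM (toEuclideanLin M⁻¹ y)

lemma sub_one_mul_norm_le_norm_toEuclideanLin_one_sub {M : Matrix n n ℝ} {c : ℝ}
    (hM : ∀ x, c * ‖x‖ ≤ ‖toEuclideanLin M x‖) (x : EuclideanSpace ℝ n) :
    (c - 1) * ‖x‖ ≤ ‖toEuclideanLin (1 - M) x‖ := by
  have h := norm_sub_norm_le (toEuclideanLin M x) x
  rw [map_sub, LinearMap.sub_apply, toLpLin_one, LinearMap.id_apply, norm_sub_rev]
  linarith [hM x]

lemma specNorm_one_sub_le (M : Matrix n n ℝ) : specNorm (1 - M) ≤ 1 + specNorm M := by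
  refine specNorm_le_of_norm_le (by linarith [specNorm_nonneg M]) fun x => ?_
  rw [map_sub, LinearMap.sub_apply, toLpLin_one, LinearMap.id_apply, add_mul, one_mul]
  exact (norm_sub_le _ _).trans (add_le_add_right (norm_toEuclideanLin_le_specNorm_mul M x) _)

end SquareMatrices

section Kronecker

lemma sum_univ_pi_fin_succ {M : Type*} [AddCommMonoid M] {N : ℕ} {n : Fin (N + 1) → Type*}
    [∀ i, Fintype (n i)] (f : (∀ i, n i) → M) :
    ∑ a, f a = ∑ a₀ : n 0, ∑ a' : ∀ i : Fin N, n i.succ, f (Fin.cons a₀ a') := by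
  rw [← (Fin.consEquiv n).sum_comp f, Fintype.sum_prod_type]
  rfl

lemma kronFamily_fin_zero {n : Fin 0 → Type*} [∀ i, Fintype (n i)] [∀ i, DecidableEq (n i)]
    (A : ∀ i, Matrix (n i) (n i) ℝ) : kronFamily A = 1 := by
  ext a b
  obtain rfl : a = b := Subsingleton.elim a b
  simp [kronFamily]

lemma kronFamily_mulVec_cons {N : ℕ} {n : Fin (N + 1) → Type*} [∀ i, Fintype (n i)]
    (A : ∀ i, Matrix (n i) (n i) ℝ) (x : (∀ i, n i) → ℝ)
    (a₀ : n 0) (a' : ∀ i : Fin N, n i.succ) :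
    (kronFamily A *ᵥ x) (Fin.cons a₀ a') =
      (A 0 *ᵥ fun b₀ =>
        (kronFamily (fun i => A i.succ) *ᵥ fun b' => x (Fin.cons b₀ b')) a') a₀ := by
  simp only [mulVec, dotProduct, kronFamily, sum_univ_pi_fin_succ, Fin.prod_univ_succ,
    Fin.cons_zero, Fin.cons_succ, Finset.mul_sum]
  exact Finset.sum_congr rfl fun _ _ => Finset.sum_congr rfl fun _ _ => by ring

lemma sum_sq_kronFamily_mulVec_succ {N : ℕ} {n : Fin (N + 1) → Type*} [∀ i, Fintype (n i)]
    (A : ∀ i, Matrix (n i) (n i) ℝ) (x : (∀ i, n i) → ℝ) :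
    ∑ a, (kronFamily A *ᵥ x) a ^ 2 =
      ∑ a' : ∀ i : Fin N, n i.succ, ∑ a₀ : n 0, (A 0 *ᵥ fun b₀ =>
        (kronFamily (fun i => A i.succ) *ᵥ fun b' => x (Fin.cons b₀ b')) a') a₀ ^ 2 := by
  rw [sum_univ_pi_fin_succ, Finset.sum_comm]
  simp only [kronFamily_mulVec_cons]

lemma sum_sq_kronFamily_mulVec_le {N : ℕ} {n : Fin N → Type*} [∀ i, Fintype (n i)]
    [∀ i, DecidableEq (n i)] (A : ∀ i, Matrix (n i) (n i) ℝ) (t : Fin N → ℝ)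
    (hA : ∀ i v, ∑ a, (A i *ᵥ v) a ^ 2 ≤ t i ^ 2 * ∑ b, v b ^ 2) (x : (∀ i, n i) → ℝ) :
    ∑ a, (kronFamily A *ᵥ x) a ^ 2 ≤ (∏ i, t i) ^ 2 * ∑ a, x a ^ 2 := by
  induction N with
  | zero => simp [kronFamily_fin_zero]
  | succ N ih =>
    set y := fun b₀ => kronFamily (fun i => A i.succ) *ᵥ fun b' => x (Fin.cons b₀ b')
    calc ∑ a, (kronFamily A *ᵥ x) a ^ 2
        ≤ ∑ a', t 0 ^ 2 * ∑ b₀, y b₀ a' ^ 2 := by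
          rw [sum_sq_kronFamily_mulVec_succ]
          exact Finset.sum_le_sum fun a' _ => hA 0 _
      _ = t 0 ^ 2 * ∑ b₀, ∑ a', y b₀ a' ^ 2 := by rw [Finset.sum_comm, Finset.mul_sum]
      _ ≤ t 0 ^ 2 * ∑ b₀, (∏ i : Fin N, t i.succ) ^ 2 * ∑ b', x (Fin.cons b₀ b') ^ 2 := by
          gcongr with b₀
          exact ih _ _ (fun i => hA i.succ) _
      _ = (∏ i, t i) ^ 2 * ∑ a, x a ^ 2 := by
          rw [Fin.prod_univ_succ, sum_univ_pi_fin_succ, ← Finset.mul_sum, mul_pow, mul_assoc]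

lemma le_sum_sq_kronFamily_mulVec {N : ℕ} {n : Fin N → Type*} [∀ i, Fintype (n i)]
    [∀ i, DecidableEq (n i)] (A : ∀ i, Matrix (n i) (n i) ℝ) (s : Fin N → ℝ)
    (hA : ∀ i v, s i ^ 2 * ∑ b, v b ^ 2 ≤ ∑ a, (A i *ᵥ v) a ^ 2) (x : (∀ i, n i) → ℝ) :
    (∏ i, s i) ^ 2 * ∑ a, x a ^ 2 ≤ ∑ a, (kronFamily A *ᵥ x) a ^ 2 := by
  induction N with
  | zero => simp [kronFamily_fin_zero]
  | succ N ih =>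
    set y := fun b₀ => kronFamily (fun i => A i.succ) *ᵥ fun b' => x (Fin.cons b₀ b')
    calc (∏ i, s i) ^ 2 * ∑ a, x a ^ 2
        = s 0 ^ 2 * ∑ b₀, (∏ i : Fin N, s i.succ) ^ 2 * ∑ b', x (Fin.cons b₀ b') ^ 2 := by
          rw [Fin.prod_univ_succ, sum_univ_pi_fin_succ, ← Finset.mul_sum, mul_pow, mul_assoc]
      _ ≤ s 0 ^ 2 * ∑ b₀, ∑ a', y b₀ a' ^ 2 := by
          gcongr with b₀
          exact ih _ _ (fun i => hA i.succ) _
      _ = ∑ a', s 0 ^ 2 * ∑ b₀, y b₀ a' ^ 2 := by rw [Finset.sum_comm, Finset.mul_sum]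
      _ ≤ ∑ a, (kronFamily A *ᵥ x) a ^ 2 := by
          rw [sum_sq_kronFamily_mulVec_succ]
          exact Finset.sum_le_sum fun a' _ => hA 0 _

end Kronecker

section KroneckerNorm

variable {N : ℕ} {n : Fin N → Type*} [∀ i, Fintype (n i)] [∀ i, DecidableEq (n i)]

lemma prod_sigmaMin_mul_norm_le_norm_toEuclideanLin_kronFamily (A : ∀ i, Matrix (n i) (n i) ℝ)
    (x : EuclideanSpace ℝ (∀ i, n i)) :
    (∏ i, sigmaMin (A i)) * ‖x‖ ≤ ‖toEuclideanLin (kronFamily A) x‖ := by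
  have hs : 0 ≤ ∏ i, sigmaMin (A i) := Finset.prod_nonneg fun i _ => sigmaMin_nonneg _
  rw [← sq_le_sq₀ (by positivity) (norm_nonneg _), mul_pow, EuclideanSpace.real_norm_sq_eq,
    EuclideanSpace.real_norm_sq_eq]
  exact le_sum_sq_kronFamily_mulVec A _ (fun i => sigmaMin_sq_mul_sum_sq_le (A i)) _

lemma specNorm_kronFamily_le (A : ∀ i, Matrix (n i) (n i) ℝ) :
    specNorm (kronFamily A) ≤ ∏ i, specNorm (A i) := by
  have hP : 0 ≤ ∏ i, specNorm (A i) := Finset.prod_nonneg fun i _ => specNorm_nonneg _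
  refine specNorm_le_of_norm_le hP fun x => ?_
  rw [← sq_le_sq₀ (norm_nonneg _) (by positivity), mul_pow, EuclideanSpace.real_norm_sq_eq,
    EuclideanSpace.real_norm_sq_eq]
  exact sum_sq_kronFamily_mulVec_le A _ (fun i => sum_sq_mulVec_le_specNorm_sq_mul (A i)) _

end KroneckerNorm

theorem cond_bound_of_prod_sigmaMin_gt_one_general {N : ℕ} {n : Fin N → Type*}
    [∀ i, Fintype (n i)] [∀ i, DecidableEq (n i)]
    (A : ∀ i, Matrix (n i) (n i) ℝ)
    (h : 1 < ∏ i, sigmaMin (A i)) :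
    IsUnit (1 - kronFamily A) ∧
      specNorm (1 - kronFamily A) * specNorm (1 - kronFamily A)⁻¹ ≤
        ((∏ i, sigmaMin (A i)) / ((∏ i, sigmaMin (A i)) - 1)) *
          (1 + ∏ i, specNorm (A i)) := by
  set s := ∏ i, sigmaMin (A i)
  set P := ∏ i, specNorm (A i)
  have hs : 0 < s - 1 := sub_pos.mpr h
  have hP : 0 ≤ P := Finset.prod_nonneg fun i _ => specNorm_nonneg _
  have hlow : ∀ x, (s - 1) * ‖x‖ ≤ ‖toEuclideanLin (1 - kronFamily A) x‖ :=
    sub_one_mul_norm_le_norm_toEuclideanLin_one_sub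
      (prod_sigmaMin_mul_norm_le_norm_toEuclideanLin_kronFamily A)
  refine ⟨isUnit_of_mul_norm_le_norm_toEuclideanLin hs hlow, ?_⟩
  calc specNorm (1 - kronFamily A) * specNorm (1 - kronFamily A)⁻¹
      ≤ (1 + P) * (s - 1)⁻¹ := by
        gcongr
        · exact specNorm_nonneg _
        · exact (specNorm_one_sub_le _).trans (add_le_add_right (specNorm_kronFamily_le A) 1)
        · exact specNorm_inv_le_of_mul_norm_le_norm_toEuclideanLin hs hlow
    _ = 1 / (s - 1) * (1 + P) := by ring
    _ ≤ s / (s - 1) * (1 + P) := by gcongr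

theorem cond_bound_of_prod_sigmaMin_gt_one {N : ℕ} {n : Fin N → Type*}
    [∀ i, Fintype (n i)] [∀ i, DecidableEq (n i)]
    (A : ∀ i, Matrix (n i) (n i) ℝ) (hA : ∀ i, IsUnit (A i))
    (h : 1 < ∏ i, sigmaMin (A i)) :
    IsUnit (1 - kronFamily A) ∧
      specNorm (1 - kronFamily A) * specNorm (1 - kronFamily A)⁻¹ ≤
        ((∏ i, sigmaMin (A i)) / ((∏ i, sigmaMin (A i)) - 1)) *
          (1 + ∏ i, specNorm (A i)) :=
  cond_bound_of_prod_sigmaMin_gt_one_general A h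
end

section
/- Let 𝒜 = I − A⁽ᴺ⁾ ⊗ ⋯ ⊗ A⁽¹⁾ and suppose for each i, yᵢ is a unit vector with A⁽ⁱ⁾A⁽ⁱ⁾ᵀ yᵢ = σ_max²(A⁽ⁱ⁾) yᵢ. Then λ_max(𝒜𝒜ᵀ) ≥ 1 + ∏_{i=1}^N σ_max²(A⁽ⁱ⁾) − 2 ∏_{i=1}^N yᵢᵀ H(A⁽ⁱ⁾) yᵢ. -/
/-!
Evaluate the Rayleigh quotient of `𝒜𝒜ᵀ` at the Kronecker vector `Y = y_N ⊗ ⋯ ⊗ y₁`. Expanding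
`𝒜𝒜ᵀ = I + KKᵀ − 2 H(K)` with `K = A⁽ᴺ⁾ ⊗ ⋯ ⊗ A⁽¹⁾`, every term factors over the Kronecker
structure: `Yᵀ Y = 1`, `Yᵀ KKᵀ Y = ∏ yᵢᵀ A⁽ⁱ⁾A⁽ⁱ⁾ᵀ yᵢ = ∏ σ_max²(A⁽ⁱ⁾)` by the mixed-product rule,
and `Yᵀ H(K) Y = Yᵀ K Y = ∏ yᵢᵀ A⁽ⁱ⁾ yᵢ = ∏ yᵢᵀ H(A⁽ⁱ⁾) yᵢ`, since a quadratic form only sees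
the symmetric part of its matrix.
-/

open Matrix

/-- Symmetric part of a square matrix. -/
noncomputable def Hpart {m : Type*} (A : Matrix m m ℝ) : Matrix m m ℝ := (1/2 : ℝ) • (A + Aᵀ)

/-- The largest eigenvalue of a (symmetric) matrix, via the Rayleigh-quotient
characterization: the supremum of `x ⬝ᵥ M x` over unit vectors `x`. -/
noncomputable def lamMax {m : Type*} [Fintype m] (M : Matrix m m ℝ) : ℝ :=
  sSup {r | ∃ x : m → ℝ, x ⬝ᵥ x = 1 ∧ r = x ⬝ᵥ M *ᵥ x}

/-- The smallest eigenvalue of a (symmetric) matrix, via the Rayleigh-quotient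
characterization: the infimum of `x ⬝ᵥ M x` over unit vectors `x`. -/
noncomputable def lamMin {m : Type*} [Fintype m] (M : Matrix m m ℝ) : ℝ :=
  sInf {r | ∃ x : m → ℝ, x ⬝ᵥ x = 1 ∧ r = x ⬝ᵥ M *ᵥ x}

section Kronecker

variable {N : ℕ} {n : Fin N → Type*} [∀ i, Fintype (n i)]

def kronVec {R : Type*} [CommSemiring R] (x : ∀ i, n i → R) : (∀ i, n i) → R :=
  fun a => ∏ i, x i (a i)

theorem kronVec_dotProduct_kronVec {R : Type*} [CommSemiring R] (x z : ∀ i, n i → R) :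
    kronVec x ⬝ᵥ kronVec z = ∏ i, x i ⬝ᵥ z i := by
  classical
  simp only [dotProduct, kronVec, ← Finset.prod_mul_distrib]
  rw [Finset.prod_univ_sum, Fintype.piFinset_univ]

theorem kronFamily_mulVec_kronVec (B : ∀ i, Matrix (n i) (n i) ℝ) (z : ∀ i, n i → ℝ) :
    kronFamily B *ᵥ kronVec z = kronVec (fun i => B i *ᵥ z i) := by
  funext a
  exact kronVec_dotProduct_kronVec (fun i => B i (a i)) z

theorem kronVec_dotProduct_kronFamily_mulVec (B : ∀ i, Matrix (n i) (n i) ℝ)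
    (x z : ∀ i, n i → ℝ) :
    kronVec x ⬝ᵥ kronFamily B *ᵥ kronVec z = ∏ i, x i ⬝ᵥ B i *ᵥ z i := by
  rw [kronFamily_mulVec_kronVec, kronVec_dotProduct_kronVec]

theorem kronFamily_mul (A B : ∀ i, Matrix (n i) (n i) ℝ) :
    kronFamily A * kronFamily B = kronFamily (fun i => A i * B i) := by
  ext a b
  exact kronVec_dotProduct_kronVec (fun i => A i (a i)) (fun i c => B i c (b i))

theorem kronFamily_transpose (A : ∀ i, Matrix (n i) (n i) ℝ) :
    (kronFamily A)ᵀ = kronFamily (fun i => (A i)ᵀ) := rfl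

end Kronecker

theorem dotProduct_Hpart_mulVec {m : Type*} [Fintype m] (A : Matrix m m ℝ) (x : m → ℝ) :
    x ⬝ᵥ Hpart A *ᵥ x = x ⬝ᵥ A *ᵥ x := by
  rw [Hpart, smul_mulVec, add_mulVec, dotProduct_smul, dotProduct_add,
    dotProduct_transpose_mulVec, smul_eq_mul]
  ring

theorem one_sub_mul_transpose_one_sub {m : Type*} [Fintype m] [DecidableEq m]
    (M : Matrix m m ℝ) : (1 - M) * (1 - M)ᵀ = 1 + M * Mᵀ - (2 : ℝ) • Hpart M := by
  rw [Hpart, smul_smul, mul_one_div_cancel two_ne_zero, one_smul, transpose_sub, transpose_one]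
  noncomm_ring

theorem dotProduct_mulVec_le_specNorm_mul {m : Type*} [Fintype m] [DecidableEq m]
    (M : Matrix m m ℝ) (x : m → ℝ) : x ⬝ᵥ M *ᵥ x ≤ specNorm M * (x ⬝ᵥ x) := by
  set T := LinearMap.toContinuousLinearMap (Matrix.toEuclideanLin M)
  set v := WithLp.toLp 2 x
  have hv : x ⬝ᵥ x = ‖v‖ ^ 2 := by
    rw [← real_inner_self_eq_norm_sq, EuclideanSpace.inner_toLp_toLp]
    simp
  calc x ⬝ᵥ M *ᵥ x = inner ℝ v (T v) := by
        simp [T, v, EuclideanSpace.inner_toLp_toLp, dotProduct_comm]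
    _ ≤ ‖v‖ * ‖T v‖ := real_inner_le_norm _ _
    _ ≤ ‖v‖ * (‖T‖ * ‖v‖) := by gcongr; exact T.le_opNorm _
    _ = specNorm M * (x ⬝ᵥ x) := by rw [hv, specNorm]; ring

-- Bounded above by the spectral norm, so the `sSup` in `lamMax` is not the junk value.
theorem le_lamMax {m : Type*} [Fintype m] (M : Matrix m m ℝ) {x : m → ℝ} (hx : x ⬝ᵥ x = 1) :
    x ⬝ᵥ M *ᵥ x ≤ lamMax M := by
  classical
  refine le_csSup ⟨specNorm M, ?_⟩ ⟨x, hx, rfl⟩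
  rintro r ⟨z, hz, rfl⟩
  simpa [hz] using dotProduct_mulVec_le_specNorm_mul M z

theorem lamMax_lower_bound {N : ℕ} {n : Fin N → Type*}
    [∀ i, Fintype (n i)] [∀ i, DecidableEq (n i)]
    (A : ∀ i, Matrix (n i) (n i) ℝ) (y : ∀ i, n i → ℝ)
    (hy1 : ∀ i, y i ⬝ᵥ y i = 1)
    (hy2 : ∀ i, (A i * (A i)ᵀ) *ᵥ y i = (specNorm (A i)) ^ 2 • y i) :
    1 + ∏ i, (specNorm (A i)) ^ 2 - 2 * ∏ i, y i ⬝ᵥ (Hpart (A i)) *ᵥ (y i) ≤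
      lamMax ((1 - kronFamily A) * (1 - kronFamily A)ᵀ) := by
  have hY : kronVec y ⬝ᵥ kronVec y = 1 := by simp [kronVec_dotProduct_kronVec, hy1]
  have hgram : kronVec y ⬝ᵥ (kronFamily A * (kronFamily A)ᵀ) *ᵥ kronVec y =
      ∏ i, specNorm (A i) ^ 2 := by
    simp [kronFamily_transpose, kronFamily_mul, kronVec_dotProduct_kronFamily_mulVec, hy2, hy1]
  have hsymm : kronVec y ⬝ᵥ Hpart (kronFamily A) *ᵥ kronVec y =
      ∏ i, y i ⬝ᵥ Hpart (A i) *ᵥ y i := by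
    simp only [dotProduct_Hpart_mulVec, kronVec_dotProduct_kronFamily_mulVec]
  calc _ = kronVec y ⬝ᵥ ((1 - kronFamily A) * (1 - kronFamily A)ᵀ) *ᵥ kronVec y := by
        rw [one_sub_mul_transpose_one_sub, sub_mulVec, add_mulVec, one_mulVec, smul_mulVec,
          dotProduct_sub, dotProduct_add, dotProduct_smul, hY, hgram, hsymm, smul_eq_mul]
    _ ≤ _ := le_lamMax _ hY
end
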